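/- arXiv:1401.0426 — 4 statements merged into one kernel-verified Lean document; each statement's English description precedes it below -/
import Mathlib

section
/- Every maximal torus M in gl(n,K) is closed under matrix multiplication. -/
/-- A matrix is absolutely semisimple if it is diagonalizable over an algebraic
closure of the base field. -/
def AbsolutelySemisimple {K : Type*} [Field K] {n : ℕ}
    (X : Matrix (Fin n) (Fin n) K) : Prop :=
  ∃ (P : GL (Fin n) (AlgebraicClosure K)) (d : Fin n → AlgebraicClosure K),
    (↑(P⁻¹) : Matrix (Fin n) (Fin n) (AlgebraicClosure K)) *
      X.map (algebraMap K (AlgebraicClosure K)) * (↑P : Matrix (Fin n) (Fin n) (AlgebraicClosure K)) =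
      Matrix.diagonal d

/-- A torus in `gl(n,K)` (where `p` is the characteristic): a subspace closed under
the `p`-map, pairwise commuting, all of whose elements are absolutely semisimple. -/
def IsTorus {K : Type*} [Field K] (p n : ℕ) (T : Submodule K (Matrix (Fin n) (Fin n) K)) : Prop :=
  (∀ X ∈ T, X ^ p ∈ T) ∧ (∀ X ∈ T, ∀ Y ∈ T, X * Y = Y * X) ∧ (∀ X ∈ T, AbsolutelySemisimple X)

/-- A maximal torus in `gl(n,K)`. -/
def IsMaxTorus {K : Type*} [Field K] (p n : ℕ) (T : Submodule K (Matrix (Fin n) (Fin n) K)) : Prop :=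
  IsTorus p n T ∧ ∀ T', IsTorus p n T' → T ≤ T' → T' = T

open Polynomial Module

section Aux

variable {F : Type*} [Field F] {n : ℕ}

/-- A matrix as an endomorphism. -/
noncomputable def toEnd (A : Matrix (Fin n) (Fin n) F) : Module.End F (Fin n → F) :=
  Matrix.toLinAlgEquiv' A

lemma toEnd_apply (A : Matrix (Fin n) (Fin n) F) (v : Fin n → F) :
    toEnd A v = A.mulVec v := Matrix.toLinAlgEquiv'_apply A v

lemma toEnd_mul (A B : Matrix (Fin n) (Fin n) F) :
    toEnd (A * B) = (toEnd A) ∘ₗ (toEnd B) := by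
  rw [toEnd, map_mul]; rfl

lemma toEnd_one : toEnd (1 : Matrix (Fin n) (Fin n) F) = LinearMap.id := by
  rw [toEnd, map_one]; rfl

lemma isSemisimple_toEnd_of_conj (A : Matrix (Fin n) (Fin n) F)
    (P : (Matrix (Fin n) (Fin n) F)ˣ) (d : Fin n → F)
    (h : P⁻¹.val * A * P.val = Matrix.diagonal d) :
    (toEnd A).IsSemisimple := by
  have hPA : P⁻¹.val * A = Matrix.diagonal d * P⁻¹.val := by
    calc P⁻¹.val * A
        = P⁻¹.val * A * (P.val * P⁻¹.val) := by rw [Units.mul_inv, mul_one]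
      _ = (P⁻¹.val * A * P.val) * P⁻¹.val := by rw [mul_assoc (P⁻¹.val * A)]
      _ = Matrix.diagonal d * P⁻¹.val := by rw [h]
  let e : (Fin n → F) ≃ₗ[F] (Fin n → F) :=
    LinearEquiv.ofLinear (toEnd P⁻¹.val) (toEnd P.val)
      (by rw [← toEnd_mul, Units.inv_mul, toEnd_one])
      (by rw [← toEnd_mul, Units.mul_inv, toEnd_one])
  have he : e.toLinearMap ∘ₗ toEnd A = toEnd (Matrix.diagonal d) ∘ₗ e.toLinearMap := by
    show toEnd P⁻¹.val ∘ₗ toEnd A = toEnd (Matrix.diagonal d) ∘ₗ toEnd P⁻¹.val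
    rw [← toEnd_mul, ← toEnd_mul, hPA]
  rw [LinearEquiv.isSemisimple_iff (toEnd A) (toEnd (Matrix.diagonal d)) e he]
  -- semisimplicity of a diagonal matrix
  haveI := Classical.decEq F
  set s : Finset F := Finset.image d Finset.univ with hs
  have hq : Squarefree (∏ μ ∈ s, (X - C μ)) :=
    (Polynomial.separable_prod_X_sub_C_iff'.mpr (fun i _ j _ h => h)).squarefree
  refine Module.End.isSemisimple_of_squarefree_aeval_eq_zero hq ?_
  have h1 : Polynomial.aeval d (∏ μ ∈ s, (X - C μ)) = 0 := by
    funext i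
    rw [aeval_fn_apply]
    rw [map_prod]
    refine Finset.prod_eq_zero (Finset.mem_image_of_mem d (Finset.mem_univ i)) ?_
    simp
  have h2 := Polynomial.aeval_algHom_apply
    ((Matrix.toLinAlgEquiv' (R := F) (n := Fin n)).toAlgHom.comp
      (Matrix.diagonalAlgHom (n := Fin n) F)) d (∏ μ ∈ s, (X - C μ))
  rw [h1, map_zero] at h2
  exact h2

lemma exists_conj_diagonal [IsAlgClosed F] (A : Matrix (Fin n) (Fin n) F)
    (h : (toEnd A).IsSemisimple) :
    ∃ (P : (Matrix (Fin n) (Fin n) F)ˣ) (d : Fin n → F),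
      P⁻¹.val * A * P.val = Matrix.diagonal d := by
  have h1 : ⨆ μ : F, (toEnd A).eigenspace μ = ⊤ := by
    have h2 := Module.End.iSup_maxGenEigenspace_eq_top (toEnd A)
    simp_rw [h.isFinitelySemisimple.maxGenEigenspace_eq_eigenspace] at h2
    exact h2
  have hsp : ⊤ ≤ Submodule.span F (⋃ μ : F, ((toEnd A).eigenspace μ : Set (Fin n → F))) := by
    rw [← h1]
    refine iSup_le fun μ x hx => ?_
    exact Submodule.subset_span (Set.mem_iUnion_of_mem μ hx)
  let b0 := Basis.ofSpan hsp
  haveI := FiniteDimensional.fintypeBasisIndex b0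
  let b := b0.reindex (b0.indexEquiv (Pi.basisFun F (Fin n)))
  have hb : ∀ j : Fin n, ∃ μ : F, A.mulVec (b j) = μ • (b j) := by
    intro j
    have hmem : b j ∈ ⋃ μ : F, ((toEnd A).eigenspace μ : Set (Fin n → F)) := by
      refine Basis.ofSpan_subset hsp ?_
      have : b j = b0 ((b0.indexEquiv (Pi.basisFun F (Fin n))).symm j) :=
        Module.Basis.reindex_apply _ _ _
      rw [this]; exact Set.mem_range_self _
    rw [Set.mem_iUnion] at hmem
    obtain ⟨μ, hμ⟩ := hmem
    refine ⟨μ, ?_⟩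
    have := Module.End.mem_eigenspace_iff.mp hμ
    rwa [toEnd_apply] at this
  choose d hd using hb
  haveI := (Pi.basisFun F (Fin n)).invertibleToMatrix b
  set T : Matrix (Fin n) (Fin n) F := (Pi.basisFun F (Fin n)).toMatrix b with hT
  refine ⟨unitOfInvertible T, d, ?_⟩
  have key : A * T = T * Matrix.diagonal d := by
    ext i j
    have h2 := congrFun (hd j) i
    simp only [Matrix.mulVec, dotProduct, Pi.smul_apply, smul_eq_mul] at h2
    rw [Matrix.mul_apply, Matrix.mul_diagonal]
    simp only [hT, Basis.toMatrix_apply, Pi.basisFun_repr]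
    rw [h2]; ring
  calc (unitOfInvertible T)⁻¹.val * A * (unitOfInvertible T).val
      = (unitOfInvertible T)⁻¹.val * (A * T) := by rw [mul_assoc]; rfl
    _ = (unitOfInvertible T)⁻¹.val * ((unitOfInvertible T).val * Matrix.diagonal d) := by
        rw [key]; rfl
    _ = ((unitOfInvertible T)⁻¹.val * (unitOfInvertible T).val) * Matrix.diagonal d := by
        rw [mul_assoc]
    _ = Matrix.diagonal d := by rw [Units.inv_mul, one_mul]

end Aux

lemma absolutelySemisimple_iff {K : Type*} [Field K] {n : ℕ} (Z : Matrix (Fin n) (Fin n) K) :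
    AbsolutelySemisimple Z ↔
      (toEnd (Z.map (algebraMap K (AlgebraicClosure K)))).IsSemisimple := by
  constructor
  · rintro ⟨P, d, h⟩
    exact isSemisimple_toEnd_of_conj _ P d h
  · intro h
    obtain ⟨P, d, hPd⟩ := exists_conj_diagonal _ h
    exact ⟨P, d, hPd⟩

theorem maxTorus_mul_mem (p n : ℕ) [Fact p.Prime] (K : Type*) [Field K] [CharP K p]
    (M : Submodule K (Matrix (Fin n) (Fin n) K)) (hM : IsMaxTorus p n M) :
    ∀ X ∈ M, ∀ Y ∈ M, X * Y ∈ M := by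
  intro X hX Y hY
  rcases Nat.eq_zero_or_pos n with hn | hn
  · subst hn
    have h0 : X * Y = 0 := Subsingleton.elim _ _
    rw [h0]; exact M.zero_mem
  haveI : NeZero n := ⟨hn.ne'⟩
  obtain ⟨⟨hMp, hMc, hMss⟩, hmax⟩ := hM
  let Ψ : Matrix (Fin n) (Fin n) K →+*
      Module.End (AlgebraicClosure K) (Fin n → AlgebraicClosure K) :=
    ((Matrix.toLinAlgEquiv' (R := AlgebraicClosure K) (n := Fin n)) :
        Matrix (Fin n) (Fin n) (AlgebraicClosure K) ≃ₐ[AlgebraicClosure K] _).toRingEquiv.toRingHom.comp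
      ((algebraMap K (AlgebraicClosure K)).mapMatrix)
  have hΨ : ∀ Z : Matrix (Fin n) (Fin n) K,
      Ψ Z = toEnd (Z.map (algebraMap K (AlgebraicClosure K))) := fun Z => rfl
  have hXadj : X ∈ Algebra.adjoin K ({X, Y} : Set (Matrix (Fin n) (Fin n) K)) :=
    Algebra.subset_adjoin (Set.mem_insert _ _)
  have hYadj : Y ∈ Algebra.adjoin K ({X, Y} : Set (Matrix (Fin n) (Fin n) K)) :=
    Algebra.subset_adjoin (Set.mem_insert_iff.mpr (Or.inr rfl))
  -- commutation of M with the adjoin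
  have hcomm_adj : ∀ W ∈ M, ∀ Z ∈ Algebra.adjoin K ({X, Y} : Set (Matrix (Fin n) (Fin n) K)),
      Commute W Z := by
    intro W hW Z hZ
    induction hZ using Algebra.adjoin_induction with
    | mem x hx =>
      rcases Set.mem_insert_iff.mp hx with h | h
      · subst h; exact show Commute W x from hMc W hW x hX
      · rw [Set.mem_singleton_iff] at h; subst h; exact show Commute W x from hMc W hW x hY
    | algebraMap r => exact Algebra.commute_algebraMap_right r W
    | add x y hx hy ihx ihy => exact ihx.add_right ihy
    | mul x y hx hy ihx ihy => exact ihx.mul_right ihy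
  -- commutation within the adjoin
  have hcomm_adj2 : ∀ Z ∈ Algebra.adjoin K ({X, Y} : Set (Matrix (Fin n) (Fin n) K)),
      ∀ Z' ∈ Algebra.adjoin K ({X, Y} : Set (Matrix (Fin n) (Fin n) K)), Commute Z Z' := by
    intro Z hZ Z' hZ'
    induction hZ using Algebra.adjoin_induction with
    | mem x hx =>
      rcases Set.mem_insert_iff.mp hx with h | h
      · subst h; exact hcomm_adj x hX Z' hZ'
      · rw [Set.mem_singleton_iff] at h; subst h; exact hcomm_adj x hY Z' hZ'
    | algebraMap r => exact Algebra.commute_algebraMap_left r Z'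
    | add x y hx hy ihx ihy => exact ihx.add_left ihy
    | mul x y hx hy ihx ihy => exact ihx.mul_left ihy
  set T' : Submodule K (Matrix (Fin n) (Fin n) K) :=
    M ⊔ Subalgebra.toSubmodule (Algebra.adjoin K ({X, Y} : Set (Matrix (Fin n) (Fin n) K)))
    with hT'def
  have hmemT' : ∀ Z ∈ T', ∃ m ∈ M,
      ∃ a ∈ Algebra.adjoin K ({X, Y} : Set (Matrix (Fin n) (Fin n) K)), Z = m + a := by
    intro Z hZ
    obtain ⟨m, hm, a, ha, h⟩ := Submodule.mem_sup.mp hZ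
    exact ⟨m, hm, a, (Subalgebra.mem_toSubmodule _).mp ha, h.symm⟩
  -- semisimplicity
  have hssM : ∀ W ∈ M, (Ψ W).IsSemisimple := fun W hW => by
    rw [hΨ]; exact (absolutelySemisimple_iff W).mp (hMss W hW)
  have hcommΨ : ∀ Z W : Matrix (Fin n) (Fin n) K, Z * W = W * Z → Commute (Ψ Z) (Ψ W) := by
    intro Z W h
    show Ψ Z * Ψ W = Ψ W * Ψ Z
    rw [← map_mul, ← map_mul, h]
  have hssA : ∀ Z ∈ Algebra.adjoin K ({X, Y} : Set (Matrix (Fin n) (Fin n) K)),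
      (Ψ Z).IsSemisimple := by
    intro Z hZ
    have hmem : Ψ Z ∈ Algebra.adjoin (AlgebraicClosure K) {Ψ X, Ψ Y} := by
      induction hZ using Algebra.adjoin_induction with
      | mem x hx =>
        rcases Set.mem_insert_iff.mp hx with h | h
        · subst h; exact Algebra.subset_adjoin (Set.mem_insert _ _)
        · rw [Set.mem_singleton_iff] at h; subst h
          exact Algebra.subset_adjoin (Set.mem_insert_iff.mpr (Or.inr rfl))
      | algebraMap r =>
        have h3 : Ψ (algebraMap K (Matrix (Fin n) (Fin n) K) r)
            = algebraMap (AlgebraicClosure K) _ (algebraMap K (AlgebraicClosure K) r) := by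
          rw [hΨ]
          have h4 : (algebraMap K (Matrix (Fin n) (Fin n) K) r).map (algebraMap K (AlgebraicClosure K))
              = algebraMap (AlgebraicClosure K) (Matrix (Fin n) (Fin n) (AlgebraicClosure K))
                  (algebraMap K (AlgebraicClosure K) r) := by
            ext i j
            simp [Matrix.map_apply, Matrix.algebraMap_eq_diagonal, Matrix.diagonal_apply,
              apply_ite (algebraMap K (AlgebraicClosure K)), Pi.algebraMap_apply]
          rw [h4, toEnd]
          exact AlgEquiv.commutes _ _
        rw [h3]
        exact Subalgebra.algebraMap_mem _ _
      | add x y hx hy ihx ihy => rw [map_add]; exact add_mem ihx ihy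
      | mul x y hx hy ihx ihy => rw [map_mul]; exact mul_mem ihx ihy
    exact Module.End.IsSemisimple.of_mem_adjoin_pair
      (hcommΨ X Y (hMc X hX Y hY)) (hssM X hX) (hssM Y hY) hmem
  -- T' is a torus
  have hT'torus : IsTorus p n T' := by
    refine ⟨?_, ?_, ?_⟩
    · intro Z hZ
      obtain ⟨m, hm, a, ha, rfl⟩ := hmemT' Z hZ
      have hc : Commute m a := hcomm_adj m hm a ha
      rw [add_pow_char_of_commute p hc]
      exact Submodule.mem_sup.mpr
        ⟨m ^ p, hMp m hm, a ^ p, (Subalgebra.mem_toSubmodule _).mpr (pow_mem ha p), rfl⟩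
    · intro Z hZ W hW
      obtain ⟨m, hm, a, ha, rfl⟩ := hmemT' Z hZ
      obtain ⟨m', hm', a', ha', rfl⟩ := hmemT' W hW
      exact Commute.add_left
        ((show Commute m m' from hMc m hm m' hm').add_right (hcomm_adj m hm a' ha'))
        (((hcomm_adj m' hm' a ha).symm).add_right (hcomm_adj2 a ha a' ha'))
    · intro Z hZ
      obtain ⟨m, hm, a, ha, rfl⟩ := hmemT' Z hZ
      rw [absolutelySemisimple_iff, ← hΨ, map_add]
      exact Module.End.IsSemisimple.add_of_commute
        (hcommΨ m a (hcomm_adj m hm a ha)) (hssM m hm) (hssA a ha)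
  have hEq : T' = M := hmax T' hT'torus le_sup_left
  have hmem : X * Y ∈ T' :=
    Submodule.mem_sup_right ((Subalgebra.mem_toSubmodule _).mpr (mul_mem hXadj hYadj))
  rwa [hEq] at hmem
end

section
/- Let A ⊆ Mat(n,K) be a commutative semisimple K-subalgebra containing the identity matrix I_n. Then there exists an injective A-module homomorphism from the regular A-module A into the standard module K^n. -/
/-!
A commutative semisimple ring `R` acting faithfully on `M` has a vector `m` with zero annihilator.
Take `m` with minimal annihilator (`R` is Artinian). A nonzero annihilator is generated by an
idempotent `e`, and by faithfulness `e • w ≠ 0` for some `w`; then `m + e • w` has strictly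
smaller annihilator. For `A ⊆ Mat(n, K)` acting on `K^n`, the embedding is `a ↦ a m`.
-/

open LinearMap

theorem ker_toSpanSingleton_add_smul_lt {R M : Type*} [CommSemiring R] [AddCommMonoid M]
    [Module R M] {m w : M} {e : R} (he : IsIdempotentElem e)
    (hem : e • m = 0) (hew : e • w ≠ 0) :
    ker (toSpanSingleton R M (m + e • w)) < ker (toSpanSingleton R M m) := by
  refine lt_of_le_of_ne (fun a ha ↦ ?_) fun h ↦ hew ?_
  · simp only [mem_ker, toSpanSingleton_apply, smul_add] at ha ⊢
    have haew : a • e • w = 0 := by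
      simpa only [smul_add, smul_comm e a, smul_smul e e, he.eq, hem, smul_zero, zero_add]
        using congr_arg (e • ·) ha
    simpa [haew] using ha
  · have : e ∈ ker (toSpanSingleton R M (m + e • w)) := h ▸ hem
    simpa [smul_add, hem, smul_smul, he.eq] using this

theorem exists_injective_toSpanSingleton {R M : Type*} [CommRing R] [IsSemisimpleRing R]
    [AddCommGroup M] [Module R M] [FaithfulSMul R M] :
    ∃ m : M, Function.Injective (toSpanSingleton R M m) := by
  obtain ⟨_, ⟨m, rfl⟩, hmin⟩ := IsArtinian.set_has_minimal
    (Set.range fun m : M ↦ ker (toSpanSingleton R M m)) ⟨_, 0, rfl⟩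
  refine ⟨m, ker_eq_bot.mp ?_⟩
  by_contra hne
  obtain ⟨e, he, hspan⟩ := IsSemisimpleRing.ideal_eq_span_idempotent (ker (toSpanSingleton R M m))
  have hem : e • m = 0 := by
    simpa using (show e ∈ ker (toSpanSingleton R M m) from hspan ▸ Ideal.mem_span_singleton_self e)
  obtain ⟨w, hew⟩ : ∃ w : M, e • w ≠ 0 := by
    by_contra! h
    have he0 : e = 0 := FaithfulSMul.eq_of_smul_eq_smul fun w : M ↦ by simpa using h w
    exact hne (by rw [hspan, he0, Set.singleton_zero, Ideal.span_zero])
  exact hmin _ ⟨m + e • w, rfl⟩ (ker_toSpanSingleton_add_smul_lt he hem hew)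

set_option synthInstance.maxHeartbeats 400000 in
theorem regular_module_embeds_standard (n : ℕ) (K : Type*) [Field K]
    (A : Subalgebra K (Matrix (Fin n) (Fin n) K))
    (hcomm : ∀ x y : A, x * y = y * x) (hss : Ideal.jacobson (⊥ : Ideal A) = ⊥) :
    ∃ f : A →ₗ[K] (Fin n → K), Function.Injective f ∧
      ∀ a x : A, f (a * x) = (a : Matrix (Fin n) (Fin n) K).mulVec (f x) := by
  let _ : CommRing A := { (inferInstance : Ring A) with mul_comm := hcomm }
  have : IsArtinianRing A := isArtinian_of_tower K inferInstance
  have : IsSemisimpleRing A :=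
    IsArtinianRing.isSemisimpleRing_iff_jacobson.mpr (by rwa [← Ideal.jacobson_bot])
  have : FaithfulSMul A (Fin n → K) :=
    ⟨fun h ↦ Subtype.ext (Matrix.ext_iff_smul.mpr h)⟩
  obtain ⟨v, hv⟩ := exists_injective_toSpanSingleton (R := A) (M := Fin n → K)
  exact ⟨(toSpanSingleton A _ v).restrictScalars K, hv, fun a x ↦ mul_smul a x v⟩
end

section
/- Let M = ρ(F_{q^n}) ⊆ End_{F_q}(F_{q^n}) be the image of the left-regular representation of the field F_{q^n}. Then the normalizer N(M) = {U ∈ GL : U⁻¹MU = M} of M in the group of invertible F_q-linear endomorphisms of F_{q^n} has exactly n(q^n − 1) elements. -/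
/-!
Conjugation by `U` in the normalizer restricts to an automorphism of the subalgebra `ρ(L) ≅ L`,
i.e. to some `σ ∈ Aut(L/K)` with `U ∘ ρ(σ x) = ρ(x) ∘ U`. Evaluating at `1` gives
`U = ρ(U 1) ∘ σ⁻¹`, so `(ω, τ) ↦ ρ(ω) ∘ τ` is a bijection `Lˣ × Aut(L/K) ≃ N(ρ(L))`. For finite
fields `|Lˣ| = qⁿ - 1` and, `L/K` being Galois, `|Aut(L/K)| = n`.
-/

namespace Algebra

variable (K L : Type*) [CommSemiring K] [CommSemiring L] [Algebra K L]

def lmulNormalizer : Set (Module.End K L)ˣ :=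
  {U | (fun f => (↑(U⁻¹) : Module.End K L) * f * (↑U : Module.End K L)) '' Set.range (lmul K L) =
    Set.range (lmul K L)}

variable {K L}

def lmulCompAut (ω : Lˣ) (τ : L ≃ₐ[K] L) : (Module.End K L)ˣ where
  val := lmul K L ω * τ.toLinearMap
  inv := τ.symm.toLinearMap * lmul K L ↑ω⁻¹
  val_inv := by ext; simp
  inv_val := by ext; simp

@[simp]
theorem lmulCompAut_apply (ω : Lˣ) (τ : L ≃ₐ[K] L) (x : L) :
    (lmulCompAut ω τ : Module.End K L) x = ω * τ x := rfl

theorem inv_lmulCompAut_apply (ω : Lˣ) (τ : L ≃ₐ[K] L) (x : L) :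
    (↑(lmulCompAut ω τ)⁻¹ : Module.End K L) x = τ.symm (↑ω⁻¹ * x) := rfl

theorem conj_lmulCompAut (ω : Lˣ) (τ : L ≃ₐ[K] L) (x : L) :
    (↑(lmulCompAut ω τ)⁻¹ : Module.End K L) * lmul K L x * ↑(lmulCompAut ω τ) =
      lmul K L (τ.symm x) := by
  ext y
  simp [inv_lmulCompAut_apply, mul_left_comm x]

theorem lmulCompAut_mem_lmulNormalizer (ω : Lˣ) (τ : L ≃ₐ[K] L) :
    lmulCompAut ω τ ∈ lmulNormalizer K L := by
  ext f
  constructor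
  · rintro ⟨_, ⟨x, rfl⟩, rfl⟩
    exact ⟨τ.symm x, (conj_lmulCompAut ω τ x).symm⟩
  · rintro ⟨x, rfl⟩
    exact ⟨lmul K L (τ x), ⟨τ x, rfl⟩, by simp only [conj_lmulCompAut, τ.symm_apply_apply]⟩

theorem lmulCompAut_injective :
    Function.Injective fun p : Lˣ × (L ≃ₐ[K] L) => lmulCompAut p.1 p.2 := by
  rintro ⟨ω, τ⟩ ⟨ω', τ'⟩ h
  have happly (x : L) : (ω : L) * τ x = ω' * τ' x := by
    simpa using LinearMap.congr_fun (congrArg Units.val h) x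
  have hω : ω = ω' := Units.ext <| by simpa using happly 1
  subst hω
  exact Prod.ext rfl <| AlgEquiv.ext fun x => (Units.mul_right_inj ω).mp (happly x)

section Normalizer

variable {U : (Module.End K L)ˣ}

noncomputable def lmulNormalizerAut (hU : U ∈ lmulNormalizer K L) : L ≃ₐ[K] L :=
  let conj := LinearEquiv.conjAlgEquiv K (LinearMap.GeneralLinearGroup.toLinearEquiv U⁻¹)
  have hrange : (lmul K L).range.map (conj : Module.End K L →ₐ[K] Module.End K L) =
      (lmul K L).range := SetLike.coe_injective <| by
    rw [Subalgebra.coe_map, AlgHom.coe_range]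
    exact hU
  (AlgEquiv.ofInjective _ lmul_injective).trans <| (conj.subalgebraMap _).trans <|
    (Subalgebra.equivOfEq _ _ hrange).trans (AlgEquiv.ofInjective _ lmul_injective).symm

theorem lmul_lmulNormalizerAut (hU : U ∈ lmulNormalizer K L) (x : L) :
    lmul K L (lmulNormalizerAut hU x) = (↑(U⁻¹) : Module.End K L) * lmul K L x * ↑U := by
  rw [lmulNormalizerAut]
  dsimp only [AlgEquiv.trans_apply]
  rw [← AlgEquiv.ofInjective_apply _ lmul_injective, AlgEquiv.apply_symm_apply]
  rfl

theorem exists_lmulCompAut_eq (hU : U ∈ lmulNormalizer K L) :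
    ∃ p : Lˣ × (L ≃ₐ[K] L), lmulCompAut p.1 p.2 = U := by
  set σ := lmulNormalizerAut hU
  have hσ (x : L) : (U : Module.End K L) (σ x) = x * (U : Module.End K L) 1 := by
    have hconj : (U : Module.End K L) * lmul K L (σ x) = lmul K L x * U := by
      rw [lmul_lmulNormalizerAut, ← mul_assoc, ← mul_assoc, Units.mul_inv, one_mul]
    simpa using LinearMap.congr_fun hconj 1
  have hU_apply (y : L) : (U : Module.End K L) y = (U : Module.End K L) 1 * σ.symm y := by
    simpa [mul_comm] using hσ (σ.symm y)
  have hunit : IsUnit ((U : Module.End K L) 1) := by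
    refine IsUnit.of_mul_eq_one (σ.symm ((↑(U⁻¹) : Module.End K L) 1)) ?_
    rw [← hU_apply, ← Module.End.mul_apply, Units.mul_inv, Module.End.one_apply]
  exact ⟨(hunit.unit, σ.symm), Units.ext <| LinearMap.ext fun y => (hU_apply y).symm⟩

end Normalizer

variable (K L) in
noncomputable def lmulNormalizerEquiv : Lˣ × (L ≃ₐ[K] L) ≃ lmulNormalizer K L :=
  Equiv.ofBijective (fun p => ⟨lmulCompAut p.1 p.2, lmulCompAut_mem_lmulNormalizer p.1 p.2⟩)
    ⟨fun _ _ h => lmulCompAut_injective (congrArg Subtype.val h),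
      fun ⟨_, hU⟩ => (exists_lmulCompAut_eq hU).imp fun _ h => Subtype.ext h⟩

variable (K L) in
theorem card_lmulNormalizer :
    Nat.card (lmulNormalizer K L) = Nat.card Lˣ * Nat.card (L ≃ₐ[K] L) := by
  rw [← Nat.card_prod]
  exact (Nat.card_congr (lmulNormalizerEquiv K L)).symm

end Algebra

theorem card_normalizer_division_torus (q n : ℕ) (K L : Type*) [Field K] [Fintype K]
    [Field L] [Fintype L] [Algebra K L] (hq : Fintype.card K = q)
    (hn : Module.finrank K L = n) :
    Nat.card {U : (Module.End K L)ˣ //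
        (fun f => (↑(U⁻¹) : Module.End K L) * f * (↑U : Module.End K L)) ''
          Set.range (Algebra.lmul K L) = Set.range (Algebra.lmul K L)} =
      n * (q ^ n - 1) := by
  change Nat.card (Algebra.lmulNormalizer K L) = _
  rw [Algebra.card_lmulNormalizer, Nat.card_units, Module.natCard_eq_pow_finrank (K := K),
    IsGalois.card_aut_eq_finrank, Nat.card_eq_fintype_card, hq, hn, mul_comm]
end

section
/- For every positive integer n, as an identity of rational functions in q: ∑ over partitions (1^{m_1},…,n^{m_n}) of n of ∏_{i=1}^n 1/(m_i!·(i(q^i−1))^{m_i}) equals q^{n(n−1)/2} / ∏_{i=1}^n (q^i − 1). -/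
/-!
Write `p i = (q ^ i - 1)⁻¹`. Multiplying the weight of a partition of `n` by `n = ∑ i mᵢ` and
removing one part `i` gives the recursion `n Zₙ = ∑ᵢ p i Zₙ₋ᵢ` for the left-hand side `Zₙ`, which
together with `Z₀ = 1` determines it. The right-hand side `Rₙ` satisfies
`(q ^ (n + 1) - 1) Rₙ₊₁ = q ^ n Rₙ`, hence `R₀ + ⋯ + Rₙ = q ^ n Rₙ`, and from these two facts the
same recursion for `Rₙ` follows by induction on `n`.
-/

open Finset Nat

theorem RatFunc.X_pow_ne_one {K : Type*} [Field K] {i : ℕ} (hi : 0 < i) :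
    (X : RatFunc K) ^ i ≠ 1 := by
  rw [← RatFunc.algebraMap_X, ← map_pow, ← map_one (algebraMap (Polynomial K) (RatFunc K)), Ne,
    (IsFractionRing.injective _ _).eq_iff]
  intro h
  simpa [hi.ne'] using congrArg Polynomial.natDegree h

theorem Nat.Partition.toFinset_parts_subset_Icc {n : ℕ} (P : n.Partition) :
    P.parts.toFinset ⊆ Icc 1 n := fun i hi => by
  rw [Multiset.mem_toFinset] at hi
  exact mem_Icc.mpr ⟨P.parts_pos hi, P.le_of_mem_parts hi⟩

theorem Nat.Partition.sum_Icc_count_mul_eq {n : ℕ} (P : n.Partition) :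
    ∑ i ∈ Icc 1 n, P.parts.count i * i = n := by
  classical
  conv_rhs => rw [← P.parts_sum, sum_multiset_count]
  exact (sum_subset P.toFinset_parts_subset_Icc fun i _ hi => by
    simp [Multiset.count_eq_zero.mpr (by simpa using hi)]).symm

namespace CycleIndex

variable {K : Type*} [Field K] (p : ℕ → K)

noncomputable def weight (s : Multiset ℕ) : K :=
  ∏ i ∈ s.toFinset, p i ^ s.count i / ((s.count i)! * i ^ s.count i)

-- The cycle index of `Sₙ` at the power sums `p i`: a partition with `mᵢ` parts equal to `i` is the
-- cycle type of `n! / ∏ mᵢ! i ^ mᵢ` permutations.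
noncomputable def eval (n : ℕ) : K :=
  ∑ P : n.Partition, weight p P.parts

variable {p}

theorem weight_eq_prod_of_subset {s : Multiset ℕ} {S : Finset ℕ} (h : s.toFinset ⊆ S) :
    weight p s = ∏ i ∈ S, p i ^ s.count i / ((s.count i)! * i ^ s.count i) :=
  prod_subset h fun i _ hi => by simp [Multiset.count_eq_zero.mpr (by simpa using hi)]

theorem eval_zero : eval p 0 = 1 := by
  simp [eval, weight]

variable [CharZero K]

theorem count_mul_weight_cons {i : ℕ} (hi : i ≠ 0) (s : Multiset ℕ) :
    (((i ::ₘ s).count i * i : ℕ) : K) * weight p (i ::ₘ s) = p i * weight p s := by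
  have hS : s.toFinset ⊆ (i ::ₘ s).toFinset := by simp [Finset.subset_insert]
  have hiS : i ∈ (i ::ₘ s).toFinset := by simp
  rw [weight_eq_prod_of_subset hS, weight, ← mul_prod_erase _ _ hiS, ← mul_prod_erase _ _ hiS,
    ← mul_assoc, ← mul_assoc]
  congr 1
  · rw [Multiset.count_cons_self, factorial_succ]
    have : (i : K) ≠ 0 := by exact_mod_cast hi
    push_cast
    field_simp
    ring
  · refine prod_congr rfl fun j hj => ?_
    rw [Multiset.count_cons_of_ne (ne_of_mem_erase hj)]

theorem sum_count_mul_weight {n i : ℕ} (hi : 1 ≤ i) (hin : i ≤ n) :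
    ∑ P : n.Partition, ((P.parts.count i * i : ℕ) : K) * weight p P.parts =
      p i * eval p (n - i) := by
  classical
  rw [← Fintype.sum_subtype_add_sum_subtype (fun P : n.Partition => i ∈ P.parts),
    Fintype.sum_eq_zero (fun P : {P : n.Partition // i ∉ P.parts} => _)
    fun P => by simp [Multiset.count_eq_zero.mpr P.2], add_zero, eval, mul_sum,
    ← (Nat.Partition.partitionWithPartEquiv hi hin).symm.sum_comp]
  refine Fintype.sum_congr _ _ fun Q => ?_
  rw [Nat.Partition.partitionWithPartEquiv_symm_apply_parts]
  exact count_mul_weight_cons (by omega) Q.parts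

theorem natCast_mul_eval (n : ℕ) :
    (n : K) * eval p n = ∑ i ∈ Icc 1 n, p i * eval p (n - i) := by
  have hsplit (P : n.Partition) : (n : K) * weight p P.parts =
      ∑ i ∈ Icc 1 n, ((P.parts.count i * i : ℕ) : K) * weight p P.parts := by
    rw [← sum_mul, ← Nat.cast_sum, P.sum_Icc_count_mul_eq]
  rw [eval, mul_sum, Fintype.sum_congr _ _ hsplit, sum_comm]
  exact sum_congr rfl fun i hi => sum_count_mul_weight (mem_Icc.mp hi).1 (mem_Icc.mp hi).2

theorem eval_eq_of_recursion {f : ℕ → K} (h0 : f 0 = 1)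
    (hrec : ∀ n : ℕ, (n : K) * f n = ∑ i ∈ Icc 1 n, p i * f (n - i)) (n : ℕ) : eval p n = f n := by
  induction n using Nat.strong_induction_on with
  | _ n ih =>
    rcases n.eq_zero_or_pos with rfl | hn
    · rw [eval_zero, h0]
    · refine mul_left_cancel₀ (Nat.cast_ne_zero.mpr hn.ne') ?_
      rw [natCast_mul_eval, hrec]
      exact sum_congr rfl fun i hi => by rw [ih _ (Nat.sub_lt hn (mem_Icc.mp hi).1)]

end CycleIndex

section QExp

variable {K : Type*} [Field K] (q : K)

-- The coefficient of `zⁿ` in the q-exponential `E_q(-z) = ∑ q ^ (n(n-1)/2) (-z)ⁿ / (q; q)ₙ`.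
noncomputable def qExpCoeff (n : ℕ) : K :=
  q ^ (n * (n - 1) / 2) / ∏ i ∈ Icc 1 n, (q ^ i - 1)

theorem qExpCoeff_zero : qExpCoeff q 0 = 1 := by
  simp [qExpCoeff]

variable {q}

theorem sub_one_mul_qExpCoeff_succ (hq : ∀ i, 0 < i → q ^ i ≠ 1) (n : ℕ) :
    (q ^ (n + 1) - 1) * qExpCoeff q (n + 1) = q ^ n * qExpCoeff q n := by
  have hprod : ∏ i ∈ Icc 1 n, (q ^ i - 1) ≠ 0 :=
    prod_ne_zero_iff.mpr fun i hi => sub_ne_zero.mpr (hq i (mem_Icc.mp hi).1)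
  have hlast : q ^ (n + 1) - 1 ≠ 0 := sub_ne_zero.mpr (hq _ n.succ_pos)
  rw [qExpCoeff, qExpCoeff, Nat.triangle_succ, prod_Icc_succ_top (by omega), pow_add q _ n]
  field_simp

theorem sum_range_qExpCoeff (hq : ∀ i, 0 < i → q ^ i ≠ 1) (n : ℕ) :
    ∑ m ∈ range (n + 1), qExpCoeff q m = q ^ n * qExpCoeff q n := by
  induction n with
  | zero => simp
  | succ n ih =>
    rw [sum_range_succ, ih, ← sub_one_mul_qExpCoeff_succ hq]
    ring

theorem sub_one_mul_inv_mul_qExpCoeff_succ (hq : ∀ i, 0 < i → q ^ i ≠ 1) {i : ℕ} (hi : 0 < i)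
    (m : ℕ) : (q ^ (i + m + 1) - 1) * ((q ^ i - 1)⁻¹ * qExpCoeff q (m + 1)) =
      qExpCoeff q (m + 1) + q ^ (i + m) * ((q ^ i - 1)⁻¹ * qExpCoeff q m) := by
  have hi : q ^ i - 1 ≠ 0 := sub_ne_zero.mpr (hq i hi)
  rw [pow_succ, pow_add]
  field_simp
  linear_combination q ^ i * sub_one_mul_qExpCoeff_succ hq m

theorem natCast_mul_qExpCoeff (hq : ∀ i, 0 < i → q ^ i ≠ 1) (n : ℕ) :
    (n : K) * qExpCoeff q n = ∑ i ∈ Icc 1 n, (q ^ i - 1)⁻¹ * qExpCoeff q (n - i) := by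
  induction n with
  | zero => simp
  | succ n ih =>
    have hlast : q ^ (n + 1) - 1 ≠ 0 := sub_ne_zero.mpr (hq _ n.succ_pos)
    have hstep : ∀ i ∈ Icc 1 n, (q ^ (n + 1) - 1) * ((q ^ i - 1)⁻¹ * qExpCoeff q (n + 1 - i)) =
        qExpCoeff q (n + 1 - i) + q ^ n * ((q ^ i - 1)⁻¹ * qExpCoeff q (n - i)) := by
      intro i hi
      obtain ⟨m, rfl⟩ := Nat.exists_eq_add_of_le (mem_Icc.mp hi).2
      rw [show i + m + 1 - i = m + 1 by omega, Nat.add_sub_cancel_left]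
      exact sub_one_mul_inv_mul_qExpCoeff_succ hq (mem_Icc.mp hi).1 m
    have hreflect :
        ∑ i ∈ Icc 1 (n + 1), qExpCoeff q (n + 1 - i) = ∑ m ∈ range (n + 1), qExpCoeff q m := by
      rw [← Ico_add_one_right_eq_Icc, sum_Ico_reflect _ _ le_rfl, Nat.sub_self,
        Nat.add_sub_cancel, Nat.Ico_zero_eq_range]
    refine mul_left_cancel₀ hlast ?_
    calc (q ^ (n + 1) - 1) * (((n + 1 : ℕ) : K) * qExpCoeff q (n + 1))
        = ∑ m ∈ range (n + 1), qExpCoeff q m + q ^ n * ((n : K) * qExpCoeff q n) := by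
          rw [sum_range_qExpCoeff hq]
          push_cast
          linear_combination ((n : K) + 1) * sub_one_mul_qExpCoeff_succ hq n
      _ = ∑ i ∈ Icc 1 (n + 1), qExpCoeff q (n + 1 - i) +
            ∑ i ∈ Icc 1 n, q ^ n * ((q ^ i - 1)⁻¹ * qExpCoeff q (n - i)) := by
          rw [hreflect, ih, mul_sum]
      _ = (q ^ (n + 1) - 1) * ∑ i ∈ Icc 1 (n + 1), (q ^ i - 1)⁻¹ * qExpCoeff q (n + 1 - i) := by
          rw [mul_sum, sum_Icc_succ_top (by omega), sum_Icc_succ_top (by omega),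
            sum_congr rfl hstep, sum_add_distrib, Nat.sub_self, mul_inv_cancel_left₀ hlast]
          ring

end QExp

open RatFunc in
theorem cayley_formula_variant_general (n : ℕ) :
    ∑ P : Nat.Partition n, ∏ i ∈ Finset.Icc 1 n,
        (1 : RatFunc ℚ) /
          (((P.parts.count i).factorial : RatFunc ℚ) *
            ((i : RatFunc ℚ) * (RatFunc.X ^ i - 1)) ^ (P.parts.count i)) =
      RatFunc.X ^ (n * (n - 1) / 2) / ∏ i ∈ Finset.Icc 1 n, (RatFunc.X ^ i - 1) := by
  have hX : ∀ i, 0 < i → (X : RatFunc ℚ) ^ i ≠ 1 := fun _ => RatFunc.X_pow_ne_one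
  change _ = qExpCoeff X n
  rw [← CycleIndex.eval_eq_of_recursion (qExpCoeff_zero _) (natCast_mul_qExpCoeff hX) n]
  refine Fintype.sum_congr _ _ fun P => ?_
  rw [CycleIndex.weight_eq_prod_of_subset P.toFinset_parts_subset_Icc]
  exact prod_congr rfl fun i _ => by rw [mul_pow, inv_pow]; ring

open RatFunc in
theorem cayley_formula_variant (n : ℕ) (hn : 0 < n) :
    ∑ P : Nat.Partition n, ∏ i ∈ Finset.Icc 1 n,
        (1 : RatFunc ℚ) /
          (((P.parts.count i).factorial : RatFunc ℚ) *
            ((i : RatFunc ℚ) * (RatFunc.X ^ i - 1)) ^ (P.parts.count i)) =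
      RatFunc.X ^ (n * (n - 1) / 2) / ∏ i ∈ Finset.Icc 1 n, (RatFunc.X ^ i - 1) :=
  cayley_formula_variant_general n
end
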